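/- For a group element w in the free group F on α₁,…,α_m with Magnus expansion E(w) = 1 + W and E(w⁻¹) = 1 + W̄ (where W, W̄ have zero constant term), the conjugate w⁻¹ α_i^{ε} w has Magnus expansion of the form 1 + εP(X_i) + O₂, where P(X_i) = X_i + X_i W + W̄ X_i + W̄ X_i W, every monomial of P(X_i) contains the variable X_i, and O₂ consists of monomials containing some variable at least twice. -/

import Mathlib

/-! Non-commutative formal power series in `m` variables over a ring `A`,
modeled as functions from words (lists of variable indices) to `A`. -/

def NCS (A : Type) (m : ℕ) : Type := List (Fin m) → A

namespace NCS

variable {A : Type} [Ring A] {m : ℕ}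


instance : AddCommGroup (NCS A m) := Pi.addCommGroup

def mulFun (f g : NCS A m) : NCS A m :=
  fun w => ∑ i ∈ Finset.range (w.length + 1), f (w.take i) * g (w.drop i)

def oneFun : NCS A m := fun w => if w = [] then (1 : A) else 0

lemma mulFun_assoc (f g h : NCS A m) : mulFun (mulFun f g) h = mulFun f (mulFun g h) := by
  funext w
  show ∑ i ∈ Finset.range (w.length + 1),
      (∑ j ∈ Finset.range ((w.take i).length + 1), f ((w.take i).take j) * g ((w.take i).drop j))
        * h (w.drop i)
    = ∑ j ∈ Finset.range (w.length + 1),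
        f (w.take j) * ∑ k ∈ Finset.range ((w.drop j).length + 1),
          g ((w.drop j).take k) * h ((w.drop j).drop k)
  set n := w.length with hn
  calc
    ∑ i ∈ Finset.range (n + 1),
        (∑ j ∈ Finset.range ((w.take i).length + 1), f ((w.take i).take j) * g ((w.take i).drop j))
          * h (w.drop i)
      = ∑ i ∈ Finset.range (n + 1), ∑ j ∈ Finset.range (i + 1),
          f (w.take j) * (g ((w.drop j).take (i - j)) * h (w.drop i)) := by
        refine Finset.sum_congr rfl (fun i hi => ?_)
        have hi' : i ≤ n := Nat.lt_succ_iff.mp (Finset.mem_range.mp hi)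
        have hlen : (w.take i).length = i := by
          simp [List.length_take, Nat.min_eq_left hi']; omega
        rw [hlen, Finset.sum_mul]
        refine Finset.sum_congr rfl (fun j hj => ?_)
        have hj' : j ≤ i := Nat.lt_succ_iff.mp (Finset.mem_range.mp hj)
        rw [List.take_take, Nat.min_eq_left hj', List.drop_take, mul_assoc]
    _ = ∑ j ∈ Finset.range (n + 1), ∑ i ∈ Finset.Ico j (n + 1),
          f (w.take j) * (g ((w.drop j).take (i - j)) * h (w.drop i)) := by
        refine Finset.sum_comm' ?_
        intro i j
        simp only [Finset.mem_range, Finset.mem_Ico]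
        omega
    _ = ∑ j ∈ Finset.range (n + 1),
          f (w.take j) * ∑ k ∈ Finset.range ((w.drop j).length + 1),
            g ((w.drop j).take k) * h ((w.drop j).drop k) := by
        refine Finset.sum_congr rfl (fun j hj => ?_)
        have hj' : j ≤ n := Nat.lt_succ_iff.mp (Finset.mem_range.mp hj)
        rw [Finset.sum_Ico_eq_sum_range, Finset.mul_sum]
        have hlen : (w.drop j).length = n - j := by simp [List.length_drop, hn]
        rw [hlen]
        have : n + 1 - j = n - j + 1 := by omega
        rw [this]
        refine Finset.sum_congr rfl (fun k hk => ?_)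
        rw [Nat.add_sub_cancel_left, List.drop_drop, Nat.add_comm j k]

lemma oneFun_mulFun (f : NCS A m) : mulFun oneFun f = f := by
  funext w
  show ∑ i ∈ Finset.range (w.length + 1), oneFun (w.take i) * f (w.drop i) = f w
  rw [Finset.sum_eq_single 0]
  · show oneFun ([] : List (Fin m)) * f w = f w
    simp [oneFun]
  · intro i hi hne
    have hi' : i < w.length + 1 := Finset.mem_range.mp hi
    have hw : w ≠ [] := by
      intro h; subst h; simp at hi'; omega
    have : oneFun (w.take i) = (0 : A) := by
      unfold oneFun
      rw [if_neg]
      rw [List.take_eq_nil_iff]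
      push_neg
      exact ⟨hne, hw⟩
    rw [this, zero_mul]
  · intro h
    exact absurd (Finset.mem_range.mpr (Nat.succ_pos _)) h

lemma mulFun_oneFun (f : NCS A m) : mulFun f oneFun = f := by
  funext w
  show ∑ i ∈ Finset.range (w.length + 1), f (w.take i) * oneFun (w.drop i) = f w
  rw [Finset.sum_eq_single w.length]
  · rw [List.take_length, List.drop_length]
    show f w * (if ([] : List (Fin m)) = [] then (1:A) else 0) = f w
    simp
  · intro i hi hne
    have hi' : i < w.length + 1 := Finset.mem_range.mp hi
    have : oneFun (w.drop i) = (0 : A) := by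
      unfold oneFun
      rw [if_neg]
      rw [List.drop_eq_nil_iff]
      omega
    rw [this, mul_zero]
  · intro h
    exact absurd (Finset.mem_range.mpr (Nat.lt_succ_self _)) h

lemma mulFun_add (f g h : NCS A m) : mulFun f (g + h) = mulFun f g + mulFun f h := by
  funext w
  show ∑ i ∈ Finset.range (w.length + 1), f (w.take i) * (g (w.drop i) + h (w.drop i))
    = (∑ i ∈ Finset.range (w.length + 1), f (w.take i) * g (w.drop i))
      + ∑ i ∈ Finset.range (w.length + 1), f (w.take i) * h (w.drop i)
  rw [← Finset.sum_add_distrib]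
  exact Finset.sum_congr rfl fun i _ => mul_add _ _ _

lemma add_mulFun (f g h : NCS A m) : mulFun (f + g) h = mulFun f h + mulFun g h := by
  funext w
  show ∑ i ∈ Finset.range (w.length + 1), (f (w.take i) + g (w.take i)) * h (w.drop i)
    = (∑ i ∈ Finset.range (w.length + 1), f (w.take i) * h (w.drop i))
      + ∑ i ∈ Finset.range (w.length + 1), g (w.take i) * h (w.drop i)
  rw [← Finset.sum_add_distrib]
  exact Finset.sum_congr rfl fun i _ => add_mul _ _ _

lemma zero_mulFun (f : NCS A m) : mulFun 0 f = 0 := by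
  funext w
  show ∑ i ∈ Finset.range (w.length + 1), (0 : A) * f (w.drop i) = (0 : A)
  simp

lemma mulFun_zero (f : NCS A m) : mulFun f 0 = 0 := by
  funext w
  show ∑ i ∈ Finset.range (w.length + 1), f (w.take i) * (0 : A) = (0 : A)
  simp

instance instRing : Ring (NCS A m) :=
  { (inferInstanceAs (AddCommGroup (NCS A m)) : AddCommGroup (NCS A m)) with
    mul := mulFun
    one := oneFun
    mul_assoc := mulFun_assoc
    one_mul := oneFun_mulFun
    mul_one := mulFun_oneFun
    left_distrib := mulFun_add
    right_distrib := add_mulFun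
    zero_mul := zero_mulFun
    mul_zero := mulFun_zero }

lemma mul_apply (f g : NCS A m) (w : List (Fin m)) :
    (f * g) w = ∑ i ∈ Finset.range (w.length + 1), f (w.take i) * g (w.drop i) := rfl

lemma one_apply (w : List (Fin m)) : (1 : NCS A m) w = if w = [] then (1:A) else 0 := rfl

/-- The variable `Xᵢ` as a power series. -/
def X (i : Fin m) : NCS A m := fun w => if w = [i] then (1:A) else 0

/-- The geometric series `1 - Xᵢ + Xᵢ² - ⋯`, the inverse of `1 + Xᵢ`. -/
def geo (i : Fin m) : NCS A m :=
  fun w => if w = List.replicate w.length i then (-1 : A) ^ w.length else 0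

lemma onePlusX_apply (i : Fin m) (u : List (Fin m)) :
    ((1 + X i : NCS A m)) u = (if u = [] then (1:A) else 0) + (if u = [i] then (1:A) else 0) := rfl

lemma concat_eq_replicate_iff (s : List (Fin m)) (a i : Fin m) :
    s ++ [a] = List.replicate (s.length + 1) i ↔ s = List.replicate s.length i ∧ a = i := by
  rw [List.replicate_succ']
  constructor
  · intro h
    have hl : s.length = (List.replicate s.length i).length := by simp
    obtain ⟨h1, h2⟩ := List.append_inj h hl
    exact ⟨h1, by simpa using h2⟩
  · rintro ⟨h1, rfl⟩
    rw [← h1]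

lemma geo_nil (i : Fin m) : geo i ([] : List (Fin m)) = (1 : A) := by
  unfold geo; simp

lemma geo_cons (i a : Fin m) (s : List (Fin m)) :
    geo i (a :: s) = if a = i then - geo i s else (0 : A) := by
  unfold geo
  by_cases ha : a = i
  · subst ha
    by_cases hs : s = List.replicate s.length a
    · rw [if_pos (by rw [List.length_cons, List.replicate_succ, ← hs]),
        if_pos rfl, if_pos hs, List.length_cons, pow_succ]
      rw [mul_neg_one]
    · rw [if_neg ?_, if_pos rfl, if_neg hs, neg_zero]
      rw [List.length_cons, List.replicate_succ]
      simp only [List.cons.injEq, true_and]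
      exact hs
  · rw [if_neg ?_, if_neg ha]
    rw [List.length_cons, List.replicate_succ]
    simp only [List.cons.injEq]
    tauto

lemma geo_concat (i a : Fin m) (s : List (Fin m)) :
    geo i (s ++ [a]) = if a = i then geo i s * (-1 : A) else 0 := by
  unfold geo
  have hl : (s ++ [a]).length = s.length + 1 := by simp
  rw [hl]
  by_cases ha : a = i
  · subst ha
    by_cases hs : s = List.replicate s.length a
    · rw [if_pos ((concat_eq_replicate_iff s a a).mpr ⟨hs, rfl⟩), if_pos rfl, if_pos hs, pow_succ]
    · rw [if_neg (fun h => hs ((concat_eq_replicate_iff s a a).mp h).1), if_pos rfl,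
        if_neg hs, zero_mul]
  · rw [if_neg (fun h => ha ((concat_eq_replicate_iff s a i).mp h).2), if_neg ha]

lemma onePlusX_mul_geo (i : Fin m) : ((1 + X i) * geo i : NCS A m) = 1 := by
  funext w
  rw [mul_apply]
  cases w with
  | nil => simp [onePlusX_apply, geo_nil, one_apply]
  | cons a s =>
      have h2 : (2 : ℕ) ≤ (a :: s).length + 1 := by simp
      rw [← Finset.sum_subset (Finset.range_subset_range.mpr h2)]
      · rw [Finset.sum_range_succ, Finset.sum_range_one]
        have ht0 : (a :: s).take 0 = [] := rfl
        have hd0 : (a :: s).drop 0 = a :: s := rfl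
        have ht1 : (a :: s).take 1 = [a] := rfl
        have hd1 : (a :: s).drop 1 = s := rfl
        rw [ht0, hd0, ht1, hd1]
        simp only [onePlusX_apply, geo_cons, one_apply]
        by_cases ha : a = i
        · subst ha; simp
        · have h' : ([a] : List (Fin m)) ≠ [i] := by simpa using ha
          simp [ha, h']
      · intro t ht htn
        have h1 : t < (a :: s).length + 1 := Finset.mem_range.mp ht
        have h2' : 2 ≤ t := by
          by_contra h
          exact htn (Finset.mem_range.mpr (by omega))
        have hlen : ((a :: s).take t).length = t := by
          rw [List.length_take]
          simp only [List.length_cons] at h1 ⊢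
          omega
        have hz : ((1 + X i : NCS A m)) ((a :: s).take t) = 0 := by
          rw [onePlusX_apply, if_neg, if_neg, add_zero]
          · intro h; rw [h] at hlen; simp at hlen; omega
          · intro h; rw [h] at hlen; simp at hlen; omega
        rw [hz, zero_mul]

lemma geo_mul_onePlusX (i : Fin m) : (geo i * (1 + X i) : NCS A m) = 1 := by
  funext w
  rw [mul_apply]
  rcases List.eq_nil_or_concat w with rfl | ⟨s, a, rfl⟩
  · simp [onePlusX_apply, geo_nil, one_apply]
  · simp only [List.concat_eq_append]
    have hlen : (s ++ [a]).length = s.length + 1 := by simp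
    have hsub : Finset.Ico s.length (s.length + 2) ⊆ Finset.range ((s ++ [a]).length + 1) := by
      intro t ht
      simp only [Finset.mem_Ico] at ht
      simp only [Finset.mem_range, hlen]
      omega
    rw [← Finset.sum_subset hsub]
    · rw [show s.length + 2 = (s.length + 1) + 1 from rfl,
        Finset.sum_Ico_succ_top (by omega), Finset.sum_Ico_succ_top (by omega),
        Finset.Ico_self, Finset.sum_empty, zero_add]
      have ht1 : (s ++ [a]).take (s.length + 1) = s ++ [a] := by
        rw [← hlen, List.take_length]
      have hd1 : (s ++ [a]).drop (s.length + 1) = [] := by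
        rw [← hlen, List.drop_length]
      have ht0 : (s ++ [a]).take s.length = s := List.take_left
      have hd0 : (s ++ [a]).drop s.length = [a] := List.drop_left
      rw [ht1, hd1, ht0, hd0]
      simp only [onePlusX_apply, geo_concat, one_apply]
      by_cases ha : a = i
      · subst ha; simp
      · have h' : ([a] : List (Fin m)) ≠ [i] := by simpa using ha
        simp [ha, h']
    · intro t ht htn
      simp only [Finset.mem_range, hlen] at ht
      simp only [Finset.mem_Ico] at htn
      have h2' : t < s.length := by omega
      have hdl : ((s ++ [a]).drop t).length = s.length + 1 - t := by
        rw [List.length_drop, hlen]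
      have hz : ((1 + X i : NCS A m)) ((s ++ [a]).drop t) = 0 := by
        rw [onePlusX_apply, if_neg, if_neg, add_zero]
        · intro h; rw [h] at hdl; simp at hdl; omega
        · intro h; rw [h] at hdl; simp at hdl; omega
      rw [hz, mul_zero]

/-- `1 + Xᵢ` as a unit of the power series ring. -/
def unitX (i : Fin m) : (NCS A m)ˣ :=
  ⟨1 + X i, geo i, onePlusX_mul_geo i, geo_mul_onePlusX i⟩

/-- The Magnus expansion, from the free group on `m` generators to the ring of
non-commutative formal power series in `m` variables over `ℤ`. -/
def E {m : ℕ} : FreeGroup (Fin m) →* NCS ℤ m :=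
  (Units.coeHom (NCS ℤ m)).comp (FreeGroup.lift fun i => unitX i)

end NCS

/-! Since `E` is multiplicative, `E (w⁻¹ αᵢ^ε w) = (1 + W̄) (1 + Xᵢ)^ε (1 + W)` and
`(1 + W̄) (1 + W) = E 1 = 1`. Writing `(1 + Xᵢ)^ε = 1 + ε Xᵢ + R`, with `R = 0` for `ε = 1` and
`R = Xᵢ² - Xᵢ³ + ⋯` for `ε = -1`, the product is `1 + ε P(Xᵢ) + (1 + W̄) R (1 + W)`.
A coefficient of a product is a sum over the splittings of a word into a prefix and a suffix,
and prefixes and suffixes of a word without repetitions (resp. avoiding `i`) again have this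
property; so the vanishing of `R` on repetition-free words, and of `Xᵢ` on words avoiding `i`,
passes to the products. -/

namespace NCS

variable {A : Type} [Ring A] {m : ℕ}

def VanishesOn (f : NCS A m) (p : List (Fin m) → Prop) : Prop := ∀ u, p u → f u = 0

namespace VanishesOn

variable {f g : NCS A m} {p : List (Fin m) → Prop}

theorem add (hf : f.VanishesOn p) (hg : g.VanishesOn p) : (f + g).VanishesOn p := fun u hu => by
  show f u + g u = 0
  rw [hf u hu, hg u hu, add_zero]

theorem mul_right (hp : ∀ u n, p u → p (u.take n)) (hf : f.VanishesOn p) (g : NCS A m) :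
    (f * g).VanishesOn p := fun u hu => by
  rw [mul_apply]
  exact Finset.sum_eq_zero fun n _ => by rw [hf _ (hp u n hu), zero_mul]

theorem mul_left (hp : ∀ u n, p u → p (u.drop n)) (hg : g.VanishesOn p) (f : NCS A m) :
    (f * g).VanishesOn p := fun u hu => by
  rw [mul_apply]
  exact Finset.sum_eq_zero fun n _ => by rw [hg _ (hp u n hu), mul_zero]

end VanishesOn

theorem X_vanishesOn_not_mem (i : Fin m) : (X i : NCS A m).VanishesOn (i ∉ ·) := by
  rintro u hu
  rw [X, if_neg]
  rintro rfl
  exact hu (List.mem_singleton_self i)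

theorem geo_sub_one_add_X_vanishesOn_nodup (i : Fin m) :
    (geo i - 1 + X i : NCS A m).VanishesOn List.Nodup := by
  intro u hu
  show geo i u - (1 : NCS A m) u + X i u = 0
  rw [one_apply, geo, X]
  match u, hu with
  | [], _ => simp
  | [a], _ => by_cases h : a = i <;> simp [h]
  | a :: b :: s, hu =>
    have hrep : a :: b :: s ≠ List.replicate (s.length + 2) i := by
      intro h
      simp only [List.replicate_succ, List.cons.injEq] at h
      obtain ⟨rfl, rfl, -⟩ := h
      simp at hu
    simp [hrep]

theorem E_of (i : Fin m) : E (FreeGroup.of i) = 1 + X i :=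
  congrArg Units.val (FreeGroup.lift_apply_of (f := fun j => unitX j))

theorem E_of_inv (i : Fin m) : E (FreeGroup.of i)⁻¹ = geo i :=
  congrArg Units.val (by rw [map_inv, FreeGroup.lift_apply_of] :
    (FreeGroup.lift fun j => unitX j) (FreeGroup.of i)⁻¹ = (unitX i)⁻¹)

theorem exists_E_zpow_of {ε : ℤ} (hε : ε = 1 ∨ ε = -1) (i : Fin m) :
    ∃ r : NCS ℤ m, E (FreeGroup.of i ^ ε) = 1 + ε • X i + r ∧ r.VanishesOn List.Nodup := by
  rcases hε with rfl | rfl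
  · exact ⟨0, by rw [zpow_one, E_of, one_zsmul, add_zero], fun _ _ => rfl⟩
  · refine ⟨geo i - 1 + X i, ?_, geo_sub_one_add_X_vanishesOn_nodup i⟩
    rw [zpow_neg_one, E_of_inv, neg_one_zsmul]
    abel

end NCS

theorem one_add_mul_one_add_add_mul_one_add {R : Type*} [Ring R] {a b : R}
    (h : (1 + b) * (1 + a) = 1) (x r : R) :
    (1 + b) * (1 + x + r) * (1 + a) =
      1 + (x + x * a + b * x + b * x * a) + (1 + b) * r * (1 + a) := by
  calc (1 + b) * (1 + x + r) * (1 + a)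
      = (1 + b) * (1 + a) + (x + x * a + b * x + b * x * a) + (1 + b) * r * (1 + a) := by
        noncomm_ring
    _ = _ := by rw [h]

open NCS

theorem magnus_conj_general (m : ℕ) (i : Fin m) (ε : ℤ) (hε : ε = 1 ∨ ε = -1)
    (w : FreeGroup (Fin m)) (W Wb : NCS ℤ m)
    (hW : E w = 1 + W) (hWb : E w⁻¹ = 1 + Wb) :
    ∃ o : NCS ℤ m,
      E (w⁻¹ * (FreeGroup.of i) ^ ε * w)
          = 1 + ε • (X i + X i * W + Wb * X i + Wb * X i * W) + o ∧
      (∀ u : List (Fin m), i ∉ u →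
        (X i + X i * W + Wb * X i + Wb * X i * W : NCS ℤ m) u = 0) ∧
      (∀ u : List (Fin m), u.Nodup → o u = 0) := by
  obtain ⟨r, hr, hr_nodup⟩ := exists_E_zpow_of hε i
  have hinv : (1 + Wb) * (1 + W) = 1 := by
    rw [← hW, ← hWb, ← map_mul, inv_mul_cancel, map_one]
  refine ⟨(1 + Wb) * r * (1 + W), ?_, ?_, ?_⟩
  · rw [map_mul, map_mul, hWb, hr, hW, one_add_mul_one_add_add_mul_one_add hinv]
    simp only [smul_add, smul_mul_assoc, mul_smul_comm]
  · have htake (u : List (Fin m)) n (hu : i ∉ u) : i ∉ u.take n :=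
      fun h => hu (List.take_subset n u h)
    have hdrop (u : List (Fin m)) n (hu : i ∉ u) : i ∉ u.drop n :=
      fun h => hu (List.drop_subset n u h)
    have hX := X_vanishesOn_not_mem (A := ℤ) i
    have hWbX := hX.mul_left hdrop Wb
    exact ((hX.add (hX.mul_right htake W)).add hWbX).add (hWbX.mul_right htake W)
  · exact (hr_nodup.mul_left (fun u n hu => hu.sublist (List.drop_sublist n u)) _).mul_right
      (fun u n hu => hu.sublist (List.take_sublist n u)) _

/-- The Magnus expansion of the conjugate `w⁻¹ αᵢ^ε w` has the form `1 + ε•P(Xᵢ) + O₂`,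
where `P(Xᵢ) = Xᵢ + Xᵢ W + W̄ Xᵢ + W̄ Xᵢ W`, every monomial of `P(Xᵢ)` contains `Xᵢ`,
and `O₂` consists of monomials containing some variable at least twice. -/
theorem magnus_conj (m : ℕ) (i : Fin m) (ε : ℤ) (hε : ε = 1 ∨ ε = -1)
    (w : FreeGroup (Fin m)) (W Wb : NCS ℤ m)
    (hW : E w = 1 + W) (hWb : E w⁻¹ = 1 + Wb)
    (hW0 : W ([] : List (Fin m)) = 0) (hWb0 : Wb ([] : List (Fin m)) = 0) :
    ∃ o : NCS ℤ m,
      E (w⁻¹ * (FreeGroup.of i) ^ ε * w)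
          = 1 + ε • (X i + X i * W + Wb * X i + Wb * X i * W) + o ∧
      (∀ u : List (Fin m), i ∉ u →
        (X i + X i * W + Wb * X i + Wb * X i * W : NCS ℤ m) u = 0) ∧
      (∀ u : List (Fin m), u.Nodup → o u = 0) :=
  magnus_conj_general m i ε hε w W Wb hW hWb
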